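/- For the state τ = (1/3)(|φ⟩⟨φ| + |ψ⟩⟨ψ| + |ξ⟩⟨ξ|) on ℂ³⊗ℂ³, with |φ⟩ = (|01⟩+|10⟩)/√2, |ψ⟩ = (|12⟩+|21⟩)/√2, |ξ⟩ = (|20⟩+|02⟩)/√2: both Tr_B τ and Tr_A τ equal (1/3)I₃, the nonzero eigenvalue of τ is 1/3 with multiplicity three, and therefore M(τ) = 0. -/

import Mathlib

/-!
τ is one third of the orthogonal projection onto the span of the orthonormal vectors φ, ψ, ξ,
so `τ * τ = τ / 3`: its eigenvalues are `0` and `1/3`, and since `tr τ = 1` the eigenvalue `1/3`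
has multiplicity three. Consequently the truncation of τ at `1/3` is τ itself and the truncation
at `0` is `0`. Both marginals of τ are `I/3`, so every partial trace of a truncation is a scalar
matrix whose eigenvalues equal the truncation level, an integer multiple of it; hence every term
of `M(τ)` vanishes.
-/

open Matrix Kronecker Finset
open scoped ComplexOrder

attribute [local instance] Classical.propDecidable

noncomputable section

/-- nearest integer multiple of `y` to `x`, ties broken downward; `0` if `y = 0`. -/
def nim (y x : ℝ) : ℝ :=
  if y = 0 then 0
  else if x - y * ⌊x / y⌋ ≤ y * ⌈x / y⌉ - x then y * ⌊x / y⌋ else y * ⌈x / y⌉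

/-- partial trace over the second (B) factor -/
def ptraceB {α β : Type*} [Fintype α] [Fintype β]
    (ρ : Matrix (α × β) (α × β) ℂ) : Matrix α α ℂ :=
  fun a a' => ∑ b : β, ρ (a, b) (a', b)

/-- partial trace over the first (A) factor -/
def ptraceA {α β : Type*} [Fintype α] [Fintype β]
    (ρ : Matrix (α × β) (α × β) ℂ) : Matrix β β ℂ :=
  fun b b' => ∑ a : α, ρ (a, b) (a, b')

/-- the (real) eigenvalues of a Hermitian matrix, junk value `0` otherwise -/
def evalsR {n : Type*} [Fintype n] [DecidableEq n] (A : Matrix n n ℂ) : n → ℝ :=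
  if h : A.IsHermitian then h.eigenvalues else 0

/-- orthogonal projection onto the η-eigenspace of a Hermitian matrix -/
def eigProj {n : Type*} [Fintype n] [DecidableEq n] (ρ : Matrix n n ℂ) (η : ℝ) :
    Matrix n n ℂ :=
  if h : ρ.IsHermitian then
    ∑ k ∈ univ.filter (fun k => h.eigenvalues k = η),
      vecMulVec (fun i => h.eigenvectorBasis k i) (star fun i => h.eigenvectorBasis k i)
  else 0

/-- truncation of ρ down to the η-eigenspace: `η • P_η` -/
def trunc {n : Type*} [Fintype n] [DecidableEq n] (ρ : Matrix n n ℂ) (η : ℝ) :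
    Matrix n n ℂ := (η : ℂ) • eigProj ρ η

/-- dimension of the η-eigenspace -/
def dimEig {n : Type*} [Fintype n] [DecidableEq n] (ρ : Matrix n n ℂ) (η : ℝ) : ℕ :=
  if h : ρ.IsHermitian then (univ.filter (fun k => h.eigenvalues k = η)).card else 0

/-- a single term of the measure `M` -/
def Mterm (η T lam : ℝ) : ℝ := -(|lam - nim η lam| * Real.logb 2 (lam / T))

/-- the measure `M` seen from side A -/
def MmeasA {α β : Type*} [Fintype α] [Fintype β] [DecidableEq α] [DecidableEq β]
    (ρ : Matrix (α × β) (α × β) ℂ) : ℝ :=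
  ∑ η ∈ Finset.image (evalsR ρ) univ, ∑ i : α,
    Mterm η (η * (dimEig ρ η : ℝ)) (evalsR (ptraceB (trunc ρ η)) i)

/-- the measure `M` seen from side B -/
def MmeasB {α β : Type*} [Fintype α] [Fintype β] [DecidableEq α] [DecidableEq β]
    (ρ : Matrix (α × β) (α × β) ℂ) : ℝ :=
  ∑ η ∈ Finset.image (evalsR ρ) univ, ∑ i : β,
    Mterm η (η * (dimEig ρ η : ℝ)) (evalsR (ptraceA (trunc ρ η)) i)

/-- the measure `M` of nonclassical correlation -/
def Mmeas {α β : Type*} [Fintype α] [Fintype β] [DecidableEq α] [DecidableEq β]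
    (ρ : Matrix (α × β) (α × β) ℂ) : ℝ := (MmeasA ρ + MmeasB ρ) / 2

def IsDensityMatrix {n : Type*} [Fintype n] [DecidableEq n] (ρ : Matrix n n ℂ) : Prop :=
  ρ.PosSemidef ∧ ρ.trace = 1

/-- ρ admits an eigenbasis consisting of product vectors -/
def HasProductEigenbasis {α β : Type*} [Fintype α] [Fintype β] [DecidableEq α] [DecidableEq β]
    (ρ : Matrix (α × β) (α × β) ℂ) : Prop :=
  ∃ (a : α → α → ℂ) (b : β → β → ℂ) (e : α → β → ℝ),
    (∀ j j', ∑ i, star (a j i) * a j' i = if j = j' then 1 else 0) ∧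
    (∀ k k', ∑ i, star (b k i) * b k' i = if k = k' then 1 else 0) ∧
    ρ = ∑ j : α, ∑ k : β,
      (e j k : ℂ) • (vecMulVec (a j) (star (a j)) ⊗ₖ vecMulVec (b k) (star (b k)))


/-- `|φ⟩ = (|01⟩ + |10⟩)/√2` on `ℂ³ ⊗ ℂ³` -/
def ketPhi3 : Fin 3 × Fin 3 → ℂ :=
  fun p => if p = (0, 1) ∨ p = (1, 0) then ((1 / Real.sqrt 2 : ℝ) : ℂ) else 0
/-- `|ψ⟩ = (|12⟩ + |21⟩)/√2` on `ℂ³ ⊗ ℂ³` -/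
def ketPsi3 : Fin 3 × Fin 3 → ℂ :=
  fun p => if p = (1, 2) ∨ p = (2, 1) then ((1 / Real.sqrt 2 : ℝ) : ℂ) else 0
/-- `|ξ⟩ = (|20⟩ + |02⟩)/√2` on `ℂ³ ⊗ ℂ³` -/
def ketXi3 : Fin 3 × Fin 3 → ℂ :=
  fun p => if p = (2, 0) ∨ p = (0, 2) then ((1 / Real.sqrt 2 : ℝ) : ℂ) else 0

/-- `τ = (1/3)(|φ⟩⟨φ| + |ψ⟩⟨ψ| + |ξ⟩⟨ξ|)` -/
def tauState : Matrix (Fin 3 × Fin 3) (Fin 3 × Fin 3) ℂ :=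
  ((1 / 3 : ℝ) : ℂ) • (vecMulVec ketPhi3 (star ketPhi3)
    + vecMulVec ketPsi3 (star ketPsi3) + vecMulVec ketXi3 (star ketXi3))

namespace Matrix

lemma isIdempotentElem_sum_vecMulVec_of_orthonormal {ι n : Type*} [Fintype ι]
    [DecidableEq ι] [Fintype n] (e : ι → n → ℂ)
    (he : ∀ i j, star (e i) ⬝ᵥ e j = if i = j then 1 else 0) :
    IsIdempotentElem (∑ i, vecMulVec (e i) (star (e i))) := by
  simp [IsIdempotentElem, Finset.sum_mul, Finset.mul_sum, vecMulVec_mul_vecMulVec, he, apply_ite]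

variable {n : Type*} [Fintype n] [DecidableEq n] {A : Matrix n n ℂ}

lemma IsHermitian.eq_sum_eigenvalues_smul_vecMulVec (hA : A.IsHermitian) :
    A = ∑ k, (hA.eigenvalues k : ℂ) •
      vecMulVec (fun i => hA.eigenvectorBasis k i) (star fun i => hA.eigenvectorBasis k i) := by
  conv_lhs => rw [hA.spectral_theorem]
  ext i j
  rw [Unitary.conjStarAlgAut_apply, mul_apply]
  simp only [mul_diagonal, star_apply, sum_apply, smul_apply, vecMulVec_apply, Pi.star_apply,
    IsHermitian.eigenvectorUnitary_apply, smul_eq_mul, RCLike.star_def, Function.comp_apply,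
    RCLike.ofReal_eq_complex_ofReal]
  exact Finset.sum_congr rfl fun k _ => by ring

lemma IsHermitian.eigenvalues_eq_zero_or_eq_of_mul_self_eq_smul (hA : A.IsHermitian) {c : ℝ}
    (hA2 : A * A = (c : ℂ) • A) (k : n) :
    hA.eigenvalues k = 0 ∨ hA.eigenvalues k = c := by
  set v : n → ℂ := WithLp.ofLp (hA.eigenvectorBasis k)
  have hv : v ≠ 0 := (WithLp.ofLp_eq_zero 2).ne.2 (hA.eigenvectorBasis.orthonormal.ne_zero k)
  have hAv : A *ᵥ v = (hA.eigenvalues k : ℂ) • v := by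
    rw [hA.mulVec_eigenvectorBasis k, RCLike.real_smul_eq_coe_smul (K := ℂ)]
    rfl
  have hsq : ((hA.eigenvalues k : ℂ) * hA.eigenvalues k - c * hA.eigenvalues k) • v = 0 := by
    have := congrArg (· *ᵥ v) hA2
    simp only [← mulVec_mulVec, hAv, mulVec_smul, smul_mulVec, smul_smul] at this
    rw [sub_smul, this, sub_self]
  have hroot : hA.eigenvalues k * (hA.eigenvalues k - c) = 0 := by
    exact_mod_cast (by linear_combination (smul_eq_zero.mp hsq).resolve_right hv :
      ((hA.eigenvalues k : ℂ)) * (hA.eigenvalues k - c) = 0)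
  rcases mul_eq_zero.mp hroot with h | h
  · exact .inl h
  · exact .inr (sub_eq_zero.mp h)

lemma IsHermitian.card_filter_eigenvalues_eq_mul_eq_trace (hA : A.IsHermitian) {c : ℝ}
    (hA2 : A * A = (c : ℂ) • A) :
    ((univ.filter fun k => hA.eigenvalues k = c).card : ℂ) * c = A.trace := by
  rw [hA.trace_eq_sum_eigenvalues, Finset.natCast_card_filter, Finset.sum_mul]
  refine Finset.sum_congr rfl fun k _ => ?_
  rcases hA.eigenvalues_eq_zero_or_eq_of_mul_self_eq_smul hA2 k with h | h <;> by_cases hc : c = 0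
  all_goals simp [h, hc, eq_comm]

end Matrix

section Truncation

variable {n : Type*} [Fintype n] [DecidableEq n] {A : Matrix n n ℂ}

lemma evalsR_of_isHermitian (hA : A.IsHermitian) : evalsR A = hA.eigenvalues := dif_pos hA

lemma evalsR_real_smul_one (c : ℝ) : evalsR ((c : ℂ) • (1 : Matrix n n ℂ)) = fun _ => c := by
  have hA : ((c : ℂ) • (1 : Matrix n n ℂ)).IsHermitian := by
    simp [IsHermitian, conjTranspose_smul]
  funext k
  rw [evalsR_of_isHermitian hA, hA.eigenvalues_eq, smul_mulVec, one_mulVec, dotProduct_smul,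
    dotProduct_comm, ← EuclideanSpace.inner_eq_star_dotProduct, inner_self_eq_norm_sq_to_K,
    hA.eigenvectorBasis.orthonormal.1 k]
  simp

lemma trunc_zero_right (A : Matrix n n ℂ) : trunc A 0 = 0 := by
  simp [trunc]

lemma trunc_of_mul_self_eq_smul (hA : A.IsHermitian) {c : ℝ} (hA2 : A * A = (c : ℂ) • A) :
    trunc A c = A := by
  rw [trunc, eigProj, dif_pos hA, Finset.smul_sum, Finset.sum_filter]
  conv_rhs => rw [hA.eq_sum_eigenvalues_smul_vecMulVec]
  refine Finset.sum_congr rfl fun k _ => ?_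
  rcases hA.eigenvalues_eq_zero_or_eq_of_mul_self_eq_smul hA2 k with h | h
  · by_cases hc : (0 : ℝ) = c <;> simp [h, hc]
  · simp [h]

end Truncation

lemma nim_intCast_mul (y : ℝ) (m : ℤ) : nim y (m * y) = m * y := by
  rcases eq_or_ne y 0 with rfl | hy
  · simp [nim]
  · simp [nim, hy, mul_comm]

lemma Mterm_intCast_mul (η T : ℝ) (m : ℤ) : Mterm η T (m * η) = 0 := by
  simp [Mterm, nim_intCast_mul]

section Measure

variable {α β : Type*} [Fintype α] [Fintype β] [DecidableEq α] [DecidableEq β]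
  {ρ : Matrix (α × β) (α × β) ℂ}

lemma MmeasA_eq_zero_of_forall_eq_intCast_mul
    (h : ∀ η ∈ univ.image (evalsR ρ), ∀ i, ∃ m : ℤ, evalsR (ptraceB (trunc ρ η)) i = m * η) :
    MmeasA ρ = 0 :=
  Finset.sum_eq_zero fun η hη => Finset.sum_eq_zero fun i _ => by
    obtain ⟨m, hm⟩ := h η hη i
    rw [hm, Mterm_intCast_mul]

lemma MmeasB_eq_zero_of_forall_eq_intCast_mul
    (h : ∀ η ∈ univ.image (evalsR ρ), ∀ i, ∃ m : ℤ, evalsR (ptraceA (trunc ρ η)) i = m * η) :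
    MmeasB ρ = 0 :=
  Finset.sum_eq_zero fun η hη => Finset.sum_eq_zero fun i _ => by
    obtain ⟨m, hm⟩ := h η hη i
    rw [hm, Mterm_intCast_mul]

end Measure

lemma ofReal_sqrt_two_inv_mul_self : ((√2 : ℝ) : ℂ)⁻¹ * ((√2 : ℝ) : ℂ)⁻¹ = 2⁻¹ := by
  rw [← mul_inv, ← Complex.ofReal_mul, Real.mul_self_sqrt zero_le_two, Complex.ofReal_ofNat]

def tauKets : Fin 3 → Fin 3 × Fin 3 → ℂ := ![ketPhi3, ketPsi3, ketXi3]

lemma tauKets_orthonormal (i j : Fin 3) :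
    star (tauKets i) ⬝ᵥ tauKets j = if i = j then 1 else 0 := by
  fin_cases i <;> fin_cases j <;>
    simp [tauKets, ketPhi3, ketPsi3, ketXi3, dotProduct, Fintype.sum_prod_type,
      Fin.sum_univ_three, ofReal_sqrt_two_inv_mul_self]
  all_goals norm_num

lemma tauState_eq_smul_sum :
    tauState = ((1 / 3 : ℝ) : ℂ) • ∑ i, vecMulVec (tauKets i) (star (tauKets i)) := by
  simp [tauState, tauKets, Fin.sum_univ_three]

lemma tauState_posSemidef : tauState.PosSemidef := by
  rw [tauState_eq_smul_sum]
  exact (posSemidef_sum _ fun i _ => posSemidef_vecMulVec_self_star _).smul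
    (Complex.zero_le_real.mpr (by norm_num))

lemma tauState_mul_self : tauState * tauState = ((1 / 3 : ℝ) : ℂ) • tauState := by
  rw [tauState_eq_smul_sum, smul_mul_smul_comm,
    (isIdempotentElem_sum_vecMulVec_of_orthonormal _ tauKets_orthonormal).eq, smul_smul]

lemma tauState_trace : tauState.trace = 1 := by
  simp_rw [tauState_eq_smul_sum, trace_smul, trace_sum, trace_vecMulVec,
    dotProduct_comm (tauKets _), tauKets_orthonormal]
  norm_num

lemma tauState_ptraceB :
    ptraceB tauState = ((1 / 3 : ℝ) : ℂ) • (1 : Matrix (Fin 3) (Fin 3) ℂ) := by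
  ext a c
  fin_cases a <;> fin_cases c <;>
    simp [ptraceB, tauState, vecMulVec_apply, ketPhi3, ketPsi3, ketXi3, Fin.sum_univ_three,
      ofReal_sqrt_two_inv_mul_self] <;> norm_num

lemma tauState_ptraceA :
    ptraceA tauState = ((1 / 3 : ℝ) : ℂ) • (1 : Matrix (Fin 3) (Fin 3) ℂ) := by
  ext a c
  fin_cases a <;> fin_cases c <;>
    simp [ptraceA, tauState, vecMulVec_apply, ketPhi3, ketPsi3, ketXi3, Fin.sum_univ_three,
      ofReal_sqrt_two_inv_mul_self] <;> norm_num

lemma evalsR_tauState_eq_zero_or_eq (k : Fin 3 × Fin 3) :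
    evalsR tauState k = 0 ∨ evalsR tauState k = 1 / 3 := by
  rw [evalsR_of_isHermitian tauState_posSemidef.isHermitian]
  exact tauState_posSemidef.isHermitian.eigenvalues_eq_zero_or_eq_of_mul_self_eq_smul
    tauState_mul_self k

lemma card_filter_evalsR_tauState : (univ.filter fun k => evalsR tauState k = 1 / 3).card = 3 := by
  have h :=
    tauState_posSemidef.isHermitian.card_filter_eigenvalues_eq_mul_eq_trace tauState_mul_self
  rw [← evalsR_of_isHermitian, tauState_trace] at h
  exact_mod_cast (by push_cast at h; linear_combination 3 * h :
    ((univ.filter fun k => evalsR tauState k = 1 / 3).card : ℂ) = 3)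

lemma ptraceB_trunc_tauState {η : ℝ} (hη : η ∈ univ.image (evalsR tauState)) :
    ptraceB (trunc tauState η) = (η : ℂ) • 1 := by
  obtain ⟨k, -, rfl⟩ := Finset.mem_image.mp hη
  rcases evalsR_tauState_eq_zero_or_eq k with h | h <;> rw [h]
  · ext; simp [trunc_zero_right, ptraceB]
  · rw [trunc_of_mul_self_eq_smul tauState_posSemidef.isHermitian tauState_mul_self,
      tauState_ptraceB]

lemma ptraceA_trunc_tauState {η : ℝ} (hη : η ∈ univ.image (evalsR tauState)) :
    ptraceA (trunc tauState η) = (η : ℂ) • 1 := by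
  obtain ⟨k, -, rfl⟩ := Finset.mem_image.mp hη
  rcases evalsR_tauState_eq_zero_or_eq k with h | h <;> rw [h]
  · ext; simp [trunc_zero_right, ptraceA]
  · rw [trunc_of_mul_self_eq_smul tauState_posSemidef.isHermitian tauState_mul_self,
      tauState_ptraceA]

/-- for τ, both partial traces equal `(1/3)I₃`, the nonzero eigenvalue of
τ is `1/3` with multiplicity three, and `M(τ) = 0`. -/
theorem tau_partialTraces_and_Mmeas :
    ptraceB tauState = ((1 / 3 : ℝ) : ℂ) • (1 : Matrix (Fin 3) (Fin 3) ℂ) ∧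
    ptraceA tauState = ((1 / 3 : ℝ) : ℂ) • (1 : Matrix (Fin 3) (Fin 3) ℂ) ∧
    (univ.filter fun k => evalsR tauState k = 1 / 3).card = 3 ∧
    Mmeas tauState = 0 := by
  refine ⟨tauState_ptraceB, tauState_ptraceA, card_filter_evalsR_tauState, ?_⟩
  have hA : MmeasA tauState = 0 := MmeasA_eq_zero_of_forall_eq_intCast_mul fun η hη i =>
    ⟨1, by rw [ptraceB_trunc_tauState hη, evalsR_real_smul_one, Int.cast_one, one_mul]⟩
  have hB : MmeasB tauState = 0 := MmeasB_eq_zero_of_forall_eq_intCast_mul fun η hη i =>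
    ⟨1, by rw [ptraceA_trunc_tauState hη, evalsR_real_smul_one, Int.cast_one, one_mul]⟩
  rw [Mmeas, hA, hB, add_zero, zero_div]

end
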